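/- arXiv:1912.08660 — 2 statements merged into one kernel-verified Lean document; each statement's English description precedes it below -/
import Mathlib

section
/- The quantum Fisher information matrix is convex in the state: for density operators ρ, σ and 0 ≤ ε ≤ 1, every diagonal element satisfies [F_Q((1−ε)ρ + εσ)]_{kk} ≤ (1−ε)[F_Q(ρ)]_{kk} + ε[F_Q(σ)]_{kk}, where F_Q is computed with respect to fixed Hermitian derivative directions ∂_kρ, ∂_kσ (the derivative of the mixture being the mixture of derivatives), using the formula [F_Q(ρ)]_{kk} = 2·vec(∂_kρ)† [ρ* ⊗ I + I ⊗ ρ]⁻¹ vec(∂_kρ). -/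
/-!
The map `(A, v) ↦ v† A⁻¹ v` is jointly convex on positive definite matrices and vectors, being
the supremum over `z` of the jointly affine functions `2 Re(z† v) - z† A z` (complete the
square, the maximum is attained at `z = A⁻¹ v`). The QFI diagonal element is this map
evaluated at `A = ρ* ⊗ I + I ⊗ ρ` and `v = vec(∂ₖρ)`, both of which depend affinely on the
pair `(ρ, ∂ₖρ)`.
-/

open Matrix
open scoped ComplexOrder
open scoped Kronecker

/-- Vectorization (column stacking, up to index convention) of a square matrix. -/
def matVec {d : ℕ} (M : Matrix (Fin d) (Fin d) ℂ) : Fin d × Fin d → ℂ :=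
  fun p => M p.1 p.2

/-- The quadratic form `2·vec(X)† [ρ* ⊗ I + I ⊗ ρ]⁻¹ vec(X)` defining the quantum
Fisher information diagonal elements. -/
noncomputable def qfiQuad {d : ℕ} (ρ X : Matrix (Fin d) (Fin d) ℂ) : ℝ :=
  (2 * (star (matVec X) ⬝ᵥ
    (((ρ.map (starRingEnd ℂ)) ⊗ₖ (1 : Matrix (Fin d) (Fin d) ℂ)
        + (1 : Matrix (Fin d) (Fin d) ℂ) ⊗ₖ ρ)⁻¹ *ᵥ matVec X))).re

namespace Matrix

variable {𝕜 m n : Type*} [RCLike 𝕜]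

open RCLike

theorem IsHermitian.star_mulVec_dotProduct [Fintype n] {H : Matrix n n 𝕜} (hH : H.IsHermitian)
    (x y : n → 𝕜) : star (H *ᵥ x) ⬝ᵥ y = star x ⬝ᵥ (H *ᵥ y) := by
  rw [star_mulVec, ← dotProduct_mulVec, hH.eq]

theorem PosDef.convexComb {A B : Matrix n n 𝕜} (hA : A.PosDef) (hB : B.PosDef) {t : ℝ}
    (ht₀ : 0 ≤ t) (ht₁ : t ≤ 1) : ((1 - t) • A + t • B).PosDef := by
  obtain rfl | ht₀ := ht₀.eq_or_lt
  · simpa using hA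
  obtain rfl | ht₁ := ht₁.eq_or_lt
  · simpa using hB
  exact (hA.smul (sub_pos.mpr ht₁)).add (hB.smul ht₀)

section InverseQuadraticForm

variable [Fintype n] [DecidableEq n] {A : Matrix n n 𝕜}

theorem PosDef.re_dotProduct_inv_mulVec_sub_eq (hA : A.PosDef) (v z : n → 𝕜) :
    re (star v ⬝ᵥ (A⁻¹ *ᵥ v)) - (2 * re (star z ⬝ᵥ v) - re (star z ⬝ᵥ (A *ᵥ z)))
      = re (star (z - A⁻¹ *ᵥ v) ⬝ᵥ (A *ᵥ (z - A⁻¹ *ᵥ v))) := by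
  have hdet : IsUnit A.det := hA.isUnit.map detMonoidHom
  have hAA : A *ᵥ (A⁻¹ *ᵥ v) = v := by rw [mulVec_mulVec, mul_nonsing_inv _ hdet, one_mulVec]
  have hcross : star (A⁻¹ *ᵥ v) ⬝ᵥ (A *ᵥ z) = star v ⬝ᵥ z := by
    rw [hA.inv.isHermitian.star_mulVec_dotProduct, mulVec_mulVec, nonsing_inv_mul _ hdet,
      one_mulVec]
  have hconj : re (star v ⬝ᵥ z) = re (star z ⬝ᵥ v) := by
    rw [star_dotProduct, RCLike.star_def, conj_re]
  have hdiag : star (A⁻¹ *ᵥ v) ⬝ᵥ v = star v ⬝ᵥ (A⁻¹ *ᵥ v) :=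
    hA.inv.isHermitian.star_mulVec_dotProduct v v
  simp only [star_sub, mulVec_sub, sub_dotProduct, dotProduct_sub, hAA, hcross, hdiag, map_sub]
  linarith

theorem PosDef.two_mul_re_dotProduct_sub_le (hA : A.PosDef) (v z : n → 𝕜) :
    2 * re (star z ⬝ᵥ v) - re (star z ⬝ᵥ (A *ᵥ z)) ≤ re (star v ⬝ᵥ (A⁻¹ *ᵥ v)) := by
  have := hA.re_dotProduct_inv_mulVec_sub_eq v z
  linarith [hA.posSemidef.re_dotProduct_nonneg (z - A⁻¹ *ᵥ v)]

theorem PosDef.two_mul_re_dotProduct_inv_mulVec_sub (hA : A.PosDef) (v : n → 𝕜) :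
    2 * re (star (A⁻¹ *ᵥ v) ⬝ᵥ v) - re (star (A⁻¹ *ᵥ v) ⬝ᵥ (A *ᵥ (A⁻¹ *ᵥ v)))
      = re (star v ⬝ᵥ (A⁻¹ *ᵥ v)) := by
  have := hA.re_dotProduct_inv_mulVec_sub_eq v (A⁻¹ *ᵥ v)
  simp only [sub_self, mulVec_zero, dotProduct_zero, map_zero] at this
  linarith

theorem re_dotProduct_inv_mulVec_convexComb_le {B : Matrix n n 𝕜} (hA : A.PosDef)
    (hB : B.PosDef) (v w : n → 𝕜) {t : ℝ} (ht₀ : 0 ≤ t) (ht₁ : t ≤ 1) :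
    re (star ((1 - t) • v + t • w) ⬝ᵥ (((1 - t) • A + t • B)⁻¹ *ᵥ ((1 - t) • v + t • w)))
      ≤ (1 - t) * re (star v ⬝ᵥ (A⁻¹ *ᵥ v)) + t * re (star w ⬝ᵥ (B⁻¹ *ᵥ w)) := by
  set M := (1 - t) • A + t • B
  set u := (1 - t) • v + t • w
  set z := M⁻¹ *ᵥ u
  calc re (star u ⬝ᵥ (M⁻¹ *ᵥ u)) = 2 * re (star z ⬝ᵥ u) - re (star z ⬝ᵥ (M *ᵥ z)) :=
        ((hA.convexComb hB ht₀ ht₁).two_mul_re_dotProduct_inv_mulVec_sub u).symm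
    _ = (1 - t) * (2 * re (star z ⬝ᵥ v) - re (star z ⬝ᵥ (A *ᵥ z)))
          + t * (2 * re (star z ⬝ᵥ w) - re (star z ⬝ᵥ (B *ᵥ z))) := by
        simp only [u, M, add_mulVec, smul_mulVec, dotProduct_add, dotProduct_smul, map_add,
          smul_re]
        ring
    _ ≤ _ := add_le_add
        (mul_le_mul_of_nonneg_left (hA.two_mul_re_dotProduct_sub_le v z) (sub_nonneg.2 ht₁))
        (mul_le_mul_of_nonneg_left (hB.two_mul_re_dotProduct_sub_le w z) ht₀)

end InverseQuadraticForm

def kroneckerSum [DecidableEq m] [DecidableEq n] (A : Matrix m m 𝕜) (B : Matrix n n 𝕜) :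
    Matrix (m × n) (m × n) 𝕜 :=
  A ⊗ₖ 1 + 1 ⊗ₖ B

theorem kroneckerSum_add [DecidableEq m] [DecidableEq n] (A A' : Matrix m m 𝕜)
    (B B' : Matrix n n 𝕜) :
    kroneckerSum (A + A') (B + B') = kroneckerSum A B + kroneckerSum A' B' := by
  simp only [kroneckerSum, add_kronecker, kronecker_add]
  abel

theorem kroneckerSum_smul [DecidableEq m] [DecidableEq n] (c : ℝ) (A : Matrix m m 𝕜)
    (B : Matrix n n 𝕜) : kroneckerSum (c • A) (c • B) = c • kroneckerSum A B := by
  simp only [kroneckerSum, smul_kronecker, kronecker_smul, smul_add]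

theorem PosDef.kroneckerSum [Fintype m] [Fintype n] [DecidableEq m] [DecidableEq n]
    {A : Matrix m m 𝕜} {B : Matrix n n 𝕜} (hA : A.PosDef) (hB : B.PosDef) :
    (Matrix.kroneckerSum A B).PosDef :=
  (hA.kronecker PosDef.one).add (PosDef.one.kronecker hB)

theorem PosDef.map_conj [Fintype n] {A : Matrix n n 𝕜} (hA : A.PosDef) :
    (A.map (starRingEnd 𝕜)).PosDef :=
  hA.transpose.conjTranspose

theorem map_conj_smul_add_smul (a b : ℝ) (A B : Matrix n n 𝕜) :
    (a • A + b • B).map (starRingEnd 𝕜)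
      = a • A.map (starRingEnd 𝕜) + b • B.map (starRingEnd 𝕜) := by
  ext i j
  simp [RCLike.conj_smul]

end Matrix

theorem matVec_smul_add_smul {d : ℕ} (a b : ℝ) (X Y : Matrix (Fin d) (Fin d) ℂ) :
    matVec (a • X + b • Y) = a • matVec X + b • matVec Y :=
  rfl

theorem qfiQuad_eq {d : ℕ} (ρ X : Matrix (Fin d) (Fin d) ℂ) :
    qfiQuad ρ X = 2 * RCLike.re (star (matVec X) ⬝ᵥ
      ((kroneckerSum (ρ.map (starRingEnd ℂ)) ρ)⁻¹ *ᵥ matVec X)) := by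
  rw [qfiQuad]
  exact RCLike.ofNat_mul_re (K := ℂ) 2 _

theorem qfi_convexity_general (d : ℕ) (ρ σ X Y : Matrix (Fin d) (Fin d) ℂ)
    (hρ : ρ.PosDef) (hσ : σ.PosDef)
    (ε : ℝ) (hε0 : 0 ≤ ε) (hε1 : ε ≤ 1) :
    qfiQuad (((1 - ε : ℝ) : ℂ) • ρ + ((ε : ℝ) : ℂ) • σ)
        (((1 - ε : ℝ) : ℂ) • X + ((ε : ℝ) : ℂ) • Y)
      ≤ (1 - ε) * qfiQuad ρ X + ε * qfiQuad σ Y := by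
  simp only [Complex.coe_smul]
  have hmix : kroneckerSum (((1 - ε) • ρ + ε • σ).map (starRingEnd ℂ)) ((1 - ε) • ρ + ε • σ)
      = (1 - ε) • kroneckerSum (ρ.map (starRingEnd ℂ)) ρ
        + ε • kroneckerSum (σ.map (starRingEnd ℂ)) σ := by
    rw [map_conj_smul_add_smul, kroneckerSum_add, kroneckerSum_smul, kroneckerSum_smul]
  rw [qfiQuad_eq, qfiQuad_eq, qfiQuad_eq, matVec_smul_add_smul, hmix]
  linarith [re_dotProduct_inv_mulVec_convexComb_le (hρ.map_conj.kroneckerSum hρ)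
    (hσ.map_conj.kroneckerSum hσ) (matVec X) (matVec Y) hε0 hε1]

/-- Convexity of the quantum Fisher information in the state:
for density matrices `ρ, σ`, Hermitian traceless derivatives `X = ∂_kρ`, `Y = ∂_kσ`
and `0 ≤ ε ≤ 1`,
`F_Q((1−ε)ρ + εσ)_{kk} ≤ (1−ε) F_Q(ρ)_{kk} + ε F_Q(σ)_{kk}`,
where the derivative of the mixture is the mixture of the derivatives. -/
theorem qfi_convexity (d : ℕ) (ρ σ X Y : Matrix (Fin d) (Fin d) ℂ)
    (hρ : ρ.PosDef) (hσ : σ.PosDef) (hρtr : ρ.trace = 1) (hσtr : σ.trace = 1)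
    (hX : X.IsHermitian) (hY : Y.IsHermitian)
    (hXtr : X.trace = 0) (hYtr : Y.trace = 0)
    (ε : ℝ) (hε0 : 0 ≤ ε) (hε1 : ε ≤ 1) :
    qfiQuad (((1 - ε : ℝ) : ℂ) • ρ + ((ε : ℝ) : ℂ) • σ)
        (((1 - ε : ℝ) : ℂ) • X + ((ε : ℝ) : ℂ) • Y)
      ≤ (1 - ε) * qfiQuad ρ X + ε * qfiQuad σ Y :=
  qfi_convexity_general d ρ σ X Y hρ hσ ε hε0 hε1
end

section
/- Quantum Fisher information upper-bounds the classical Fisher information: for a smooth family of positive definite density matrices ρ_θ with symmetric logarithmic derivative L (satisfying Lρ + ρL = 2∂_θρ) and any orthonormal basis {|b_n⟩} with p(n|θ) = ⟨b_n|ρ_θ|b_n⟩ > 0, one has Σ_n (∂_θ p(n|θ))²/p(n|θ) ≤ tr[ρ_θ L²]. -/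
/-!
Write `⟨u, v⟩ = star u ⬝ᵥ v`. Taking the expectation of `Lρ + ρL = 2 ∂ρ` in `b` gives
`∂p = Re ⟨L b, ρ b⟩`, and Cauchy–Schwarz for the positive semidefinite form `⟨u, ρ v⟩` bounds
`(∂p)²` by `⟨b, ρ b⟩ ⟨L b, ρ L b⟩ = p ⟨b, LρL b⟩`. Summing over an orthonormal basis turns
`Σ ⟨b, LρL b⟩` into `tr (LρL) = tr (ρL²)`.
-/

open Matrix
open scoped ComplexOrder

namespace Matrix

section RCLike

variable {𝕜 n : Type*} [RCLike 𝕜] [Fintype n]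

lemma PosSemidef.norm_star_dotProduct_mulVec_sq_le {M : Matrix n n 𝕜} (hM : M.PosSemidef)
    (x y : n → 𝕜) :
    ‖star x ⬝ᵥ (M *ᵥ y)‖ ^ 2 ≤
      RCLike.re (star x ⬝ᵥ (M *ᵥ x)) * RCLike.re (star y ⬝ᵥ (M *ᵥ y)) := by
  let _ := M.toSeminormedAddCommGroup hM
  let _ := M.toInnerProductSpace hM
  have hinner (u v : n → 𝕜) : inner 𝕜 u v = star u ⬝ᵥ (M *ᵥ v) := dotProduct_comm _ _
  have h := inner_mul_inner_self_le (𝕜 := 𝕜) x y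
  rw [norm_inner_symm y x, ← sq] at h
  simpa only [hinner] using h

lemma star_star_dotProduct_mulVec (M : Matrix n n 𝕜) (x y : n → 𝕜) :
    star (star x ⬝ᵥ (M *ᵥ y)) = star y ⬝ᵥ (Mᴴ *ᵥ x) := by
  rw [← star_dotProduct, star_mulVec, dotProduct_mulVec]

lemma IsHermitian.star_dotProduct_mul_mulVec {L ρ : Matrix n n 𝕜} (hL : L.IsHermitian)
    (x y : n → 𝕜) : star x ⬝ᵥ ((L * ρ) *ᵥ y) = star (L *ᵥ x) ⬝ᵥ (ρ *ᵥ y) := by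
  rw [← mulVec_mulVec, star_mulVec, hL.eq, dotProduct_mulVec]

lemma IsHermitian.re_star_dotProduct_mulVec_of_add_eq_two_smul {L ρ D : Matrix n n 𝕜}
    (hL : L.IsHermitian) (hρ : ρ.IsHermitian) (h : L * ρ + ρ * L = (2 : 𝕜) • D) (x : n → 𝕜) :
    RCLike.re (star x ⬝ᵥ (D *ᵥ x)) = RCLike.re (star (L *ᵥ x) ⬝ᵥ (ρ *ᵥ x)) := by
  have hρL : star x ⬝ᵥ ((ρ * L) *ᵥ x) = star (star (L *ᵥ x) ⬝ᵥ (ρ *ᵥ x)) := by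
    rw [← hL.star_dotProduct_mul_mulVec, star_star_dotProduct_mulVec, conjTranspose_mul,
      hL.eq, hρ.eq]
  have h2 : (2 : 𝕜) * (star x ⬝ᵥ (D *ᵥ x)) = star x ⬝ᵥ ((L * ρ + ρ * L) *ᵥ x) := by
    rw [h, smul_mulVec, dotProduct_smul, smul_eq_mul]
  rw [add_mulVec, dotProduct_add, hL.star_dotProduct_mul_mulVec, hρL] at h2
  have h2re := congrArg RCLike.re h2
  simp only [RCLike.mul_re, RCLike.ofNat_re, RCLike.ofNat_im, zero_mul, sub_zero,
    RCLike.star_def, map_add, RCLike.conj_re] at h2re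
  linarith

lemma PosSemidef.sq_re_star_dotProduct_mulVec_div_le {ρ L D : Matrix n n 𝕜}
    (hρ : ρ.PosSemidef) (hL : L.IsHermitian) (h : L * ρ + ρ * L = (2 : 𝕜) • D) (x : n → 𝕜) :
    RCLike.re (star x ⬝ᵥ (D *ᵥ x)) ^ 2 / RCLike.re (star x ⬝ᵥ (ρ *ᵥ x)) ≤
      RCLike.re (star x ⬝ᵥ ((L * ρ * L) *ᵥ x)) := by
  have hLρL : star x ⬝ᵥ ((L * ρ * L) *ᵥ x) = star (L *ᵥ x) ⬝ᵥ (ρ *ᵥ (L *ᵥ x)) := by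
    rw [← mulVec_mulVec, hL.star_dotProduct_mul_mulVec]
  rw [hL.re_star_dotProduct_mulVec_of_add_eq_two_smul hρ.isHermitian h, hLρL]
  set c := star (L *ᵥ x) ⬝ᵥ (ρ *ᵥ x)
  refine div_le_of_le_mul₀ (hρ.re_dotProduct_nonneg x) (hρ.re_dotProduct_nonneg _) ?_
  calc RCLike.re c ^ 2 ≤ ‖c‖ ^ 2 :=
        sq_le_sq.mpr ((RCLike.abs_re_le_norm c).trans (le_abs_self _))
    _ ≤ _ := hρ.norm_star_dotProduct_mulVec_sq_le (L *ᵥ x) x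

end RCLike

lemma sum_star_dotProduct_mulVec_eq_trace {R n : Type*} [CommRing R] [StarRing R] [Fintype n]
    [DecidableEq n] (b : n → n → R) (hb : ∀ i j, star (b i) ⬝ᵥ b j = if i = j then 1 else 0)
    (A : Matrix n n R) : ∑ i, star (b i) ⬝ᵥ (A *ᵥ b i) = A.trace := by
  -- `U` has the `b i` as columns: `Uᴴ * U = 1` is orthonormality, and `U` is square.
  set U := (of b)ᵀ
  have hU : Uᴴ * U = 1 := by
    ext i j
    exact hb i j
  calc ∑ i, star (b i) ⬝ᵥ (A *ᵥ b i) = (Uᴴ * (A * U)).trace := rfl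
    _ = A.trace := by rw [trace_mul_comm, mul_assoc, mul_eq_one_comm.mp hU, mul_one]

end Matrix

theorem classical_le_quantum_fisher_general (d : ℕ) (b : Fin d → (Fin d → ℂ))
    (horth : ∀ m n, star (b m) ⬝ᵥ b n = if m = n then (1 : ℂ) else 0)
    (ρ L dρ : Matrix (Fin d) (Fin d) ℂ)
    (hρ : ρ.PosDef)
    (hL : L.IsHermitian)
    (hrel : L * ρ + ρ * L = (2 : ℂ) • dρ) :
    ∑ n, ((star (b n) ⬝ᵥ (dρ *ᵥ b n)).re) ^ 2 / (star (b n) ⬝ᵥ (ρ *ᵥ b n)).re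
      ≤ (ρ * L * L).trace.re := by
  calc ∑ n, ((star (b n) ⬝ᵥ (dρ *ᵥ b n)).re) ^ 2 / (star (b n) ⬝ᵥ (ρ *ᵥ b n)).re
      ≤ ∑ n, (star (b n) ⬝ᵥ ((L * ρ * L) *ᵥ b n)).re := Finset.sum_le_sum fun n _ =>
        hρ.posSemidef.sq_re_star_dotProduct_mulVec_div_le hL hrel (b n)
    _ = (L * ρ * L).trace.re := by
      rw [← Complex.re_sum, sum_star_dotProduct_mulVec_eq_trace b horth]
    _ = (ρ * L * L).trace.re := by rw [mul_assoc, trace_mul_comm]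

/-- Quantum Fisher information upper-bounds the classical Fisher
information: for a positive definite density matrix `ρ` with Hermitian SLD `L`
(`Lρ + ρL = 2∂_θρ`) and any orthonormal basis `{|b_n⟩}` with
`p(n) = ⟨b_n|ρ|b_n⟩ > 0`, one has `Σ_n (∂_θ p(n))²/p(n) ≤ tr[ρL²]`. -/
theorem classical_le_quantum_fisher (d : ℕ) (b : Fin d → (Fin d → ℂ))
    (horth : ∀ m n, star (b m) ⬝ᵥ b n = if m = n then (1 : ℂ) else 0)
    (ρ L dρ : Matrix (Fin d) (Fin d) ℂ)
    (hρ : ρ.PosDef) (htr : ρ.trace = 1)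
    (hL : L.IsHermitian) (hdρ : dρ.IsHermitian)
    (hrel : L * ρ + ρ * L = (2 : ℂ) • dρ)
    (hp : ∀ n, 0 < (star (b n) ⬝ᵥ (ρ *ᵥ b n)).re) :
    ∑ n, ((star (b n) ⬝ᵥ (dρ *ᵥ b n)).re) ^ 2 / (star (b n) ⬝ᵥ (ρ *ᵥ b n)).re
      ≤ (ρ * L * L).trace.re :=
  classical_le_quantum_fisher_general d b horth ρ L dρ hρ hL hrel
end
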